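/- arXiv:1504.04429 — 2 statements merged into one kernel-verified Lean document; each statement's English description precedes it below -/
import Mathlib

section
/- Let (π_y) be a POVM on ℂ^d with every π_y ≠ 0, and let (ψ_x) be a finite family of nonzero vectors in ℂ^d with ∑_x ‖ψ_x‖² = 1 (a pure-state ensemble with states ρ_x = |ψ_x⟩⟨ψ_x|). Then the mutual information satisfies I(ψ; π) ≤ ln d − ∑_{x,y} ‖ψ_x‖² (Tr π_y) · η( ⟨ψ_x|π_y|ψ_x⟩ / (‖ψ_x‖² Tr π_y) ), where η(u) := −u ln u. -/
open MeasureTheory Matrix Finset Filter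
open scoped ComplexOrder

noncomputable section

/-- The `k`-fold Kronecker tensor power of a `d × d` matrix, acting on `(ℂ^d)^{⊗k}`
(indexed by functions `Fin k → Fin d`). -/
def matTensorPow {d : ℕ} (M : Matrix (Fin d) (Fin d) ℂ) (k : ℕ) :
    Matrix (Fin k → Fin d) (Fin k → Fin d) ℂ :=
  Matrix.of fun f g => ∏ i, M (f i) (g i)

/-- The orthogonal projection onto the symmetric subspace of `(ℂ^d)^{⊗k}`,
written as the average of the permutation operators. -/
def symProj (k d : ℕ) : Matrix (Fin k → Fin d) (Fin k → Fin d) ℂ :=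
  ((Nat.factorial k : ℂ))⁻¹ •
    ∑ σ : Equiv.Perm (Fin k),
      Matrix.of fun f g => if (∀ i, f (σ i) = g i) then (1 : ℂ) else 0

/-- A (finite) POVM on `ℂ^d`: positive semidefinite effects summing to the identity. -/
def IsPOVM {d m : ℕ} (π : Fin m → Matrix (Fin d) (Fin d) ℂ) : Prop :=
  (∀ y, (π y).PosSemidef) ∧ ∑ y, π y = 1

/-- A spherical quantum `t`-design POVM on `ℂ^d`. -/
def IsTDesignPOVM {d m : ℕ} (t : ℕ) (π : Fin m → Matrix (Fin d) (Fin d) ℂ) : Prop :=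
  IsPOVM π ∧ (∀ y, π y ≠ 0) ∧
    ∀ k, 1 ≤ k → k ≤ t →
      ((d : ℂ))⁻¹ • ∑ y, (((π y).trace) ^ (k - 1))⁻¹ • matTensorPow (π y) k
        = ((Nat.choose (d - 1 + k) k : ℂ))⁻¹ • symProj k d

/-- A (finite) ensemble on `ℂ^d`: positive semidefinite matrices with unit total trace. -/
def IsEnsemble {d n : ℕ} (ρ : Fin n → Matrix (Fin d) (Fin d) ℂ) : Prop :=
  (∀ x, (ρ x).PosSemidef) ∧ ∑ x, (ρ x).trace = 1

/-- The mutual information (in nats) of the joint distribution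
`p_{x,y} = Tr(ρ_x π_y)`; terms with `p_{x,y} = 0` vanish. -/
def mutualInfo {d n m : ℕ} (ρ : Fin n → Matrix (Fin d) (Fin d) ℂ)
    (π : Fin m → Matrix (Fin d) (Fin d) ℂ) : ℝ :=
  ∑ x, ∑ y,
    ((ρ x * π y).trace).re *
      Real.log (((ρ x * π y).trace).re /
        (((ρ x).trace).re * ∑ x', ((ρ x' * π y).trace).re))

/-- The informational power of a POVM: the supremum of the mutual information
over all (finite) ensembles. -/
def infoPower {d m : ℕ} (π : Fin m → Matrix (Fin d) (Fin d) ℂ) : ℝ :=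
  sSup {w | ∃ (n : ℕ) (ρ : Fin n → Matrix (Fin d) (Fin d) ℂ),
    IsEnsemble ρ ∧ w = mutualInfo ρ π}

/-- The accessible information of an ensemble: the supremum of the mutual
information over all (finite) POVMs. -/
def accInfo {d n : ℕ} (ρ : Fin n → Matrix (Fin d) (Fin d) ℂ) : ℝ :=
  sSup {w | ∃ (m : ℕ) (π : Fin m → Matrix (Fin d) (Fin d) ℂ),
    IsPOVM π ∧ w = mutualInfo ρ π}

/-- `η(u) = -u ln u` (with `η(0) = 0`). -/
def etaFn (u : ℝ) : ℝ := -u * Real.log u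

/-! With `P x y = ⟨ψ_x|π_y|ψ_x⟩`, `p x = ‖ψ_x‖²`, `T y = Tr π_y` and `q y = ∑ x, P x y`,
each term `p x * T y * η (P x y / (p x * T y))` equals `-P x y * log (P x y / (p x * T y))`, so
the mutual information plus the sum of these terms is `∑ y, q y * log (T y / q y)`. By
`log u ≤ u - 1` this is at most `log (∑ y, T y) = log d`. Only positivity of the states is used,
so the bound holds for every ensemble, mixed or pure. -/

section

open Real

theorem sum_mul_log_div_le_log_sum {ι : Type*} [Fintype ι] {q T : ι → ℝ}
    (hq : ∀ i, 0 ≤ q i) (hq1 : ∑ i, q i = 1) (hT : ∀ i, 0 ≤ T i)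
    (hqT : ∀ i, T i = 0 → q i = 0) :
    ∑ i, q i * log (T i / q i) ≤ log (∑ i, T i) := by
  set S := ∑ i, T i
  have hS : 0 < S := by
    obtain ⟨i, -, hqi⟩ := exists_ne_zero_of_sum_ne_zero (hq1.trans_ne one_ne_zero)
    exact ((hT i).lt_of_ne' fun h => hqi (hqT i h)).trans_le
      (single_le_sum (fun j _ => hT j) (mem_univ i))
  have key : ∀ i, q i * log (T i / q i) ≤ T i / S - q i + q i * log S := by
    intro i
    rcases (hq i).eq_or_lt with h0 | hpos
    · simpa [← h0] using div_nonneg (hT i) hS.le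
    have hTi : 0 < T i := (hT i).lt_of_ne' fun h => hpos.ne' (hqT i h)
    have hlog : log (T i / q i) = log (T i / (q i * S)) + log S := by
      rw [← log_mul (by positivity) hS.ne']
      congr 1
      field_simp
    have hlog_le : log (T i / (q i * S)) ≤ T i / (q i * S) - 1 :=
      log_le_sub_one_of_pos (by positivity)
    rw [hlog]
    calc q i * (log (T i / (q i * S)) + log S)
        ≤ q i * (T i / (q i * S) - 1) + q i * log S := by rw [mul_add]; gcongr
      _ = T i / S - q i + q i * log S := by field_simp
  calc ∑ i, q i * log (T i / q i) ≤ ∑ i, (T i / S - q i + q i * log S) :=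
        sum_le_sum fun i _ => key i
    _ = log S := by
      rw [sum_add_distrib, sum_sub_distrib, ← sum_div, ← sum_mul, hq1, div_self hS.ne']
      ring

-- Also at `a = 0`, where both sides vanish since `b / 0 = 0`.
theorem mul_etaFn_div (a b : ℝ) : a * etaFn (b / a) = -(b * log (b / a)) := by
  rcases eq_or_ne a 0 with rfl | ha
  · simp
  · rw [etaFn]
    field_simp

theorem sum_mul_log_div_marginal_le {α β : Type*} [Fintype α] [Fintype β]
    {P : α → β → ℝ} {p : α → ℝ} {T : β → ℝ} (hP : ∀ x y, 0 ≤ P x y)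
    (hp : ∀ x, ∑ y, P x y = p x) (hp1 : ∑ x, p x = 1) (hT : ∀ y, 0 ≤ T y)
    (hPT : ∀ x y, T y = 0 → P x y = 0) :
    ∑ x, ∑ y, P x y * log (P x y / (p x * ∑ x', P x' y))
      ≤ log (∑ y, T y) - ∑ x, ∑ y, p x * T y * etaFn (P x y / (p x * T y)) := by
  obtain ⟨q, hq⟩ : ∃ q : β → ℝ, ∀ y, ∑ x, P x y = q y := ⟨_, fun _ => rfl⟩
  simp_rw [hq]
  have hsplit : ∀ x y, P x y * log (P x y / (p x * q y))
      = P x y * log (P x y / (p x * T y)) + P x y * log (T y / q y) := by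
    intro x y
    rcases (hP x y).eq_or_lt with h0 | hpos
    · simp [← h0]
    have hpx : 0 < p x := hpos.trans_le (hp x ▸ single_le_sum (fun y' _ => hP x y') (mem_univ y))
    have hqy : 0 < q y := hpos.trans_le (hq y ▸ single_le_sum (fun x' _ => hP x' y) (mem_univ x))
    have hTy : 0 < T y := (hT y).lt_of_ne' fun h => hpos.ne' (hPT x y h)
    rw [← mul_add, ← log_mul (by positivity) (by positivity)]
    congr 2
    field_simp
  have hq1 : ∑ y, q y = 1 := by simp_rw [← hq]; rw [sum_comm]; simp_rw [hp]; exact hp1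
  have hgibbs := sum_mul_log_div_le_log_sum (fun y => hq y ▸ sum_nonneg fun x _ => hP x y) hq1 hT
    fun y hy => hq y ▸ sum_eq_zero fun x _ => hPT x y hy
  simp_rw [mul_etaFn_div, sum_neg_distrib, sub_neg_eq_add, hsplit, sum_add_distrib]
  rw [sum_comm (f := fun x y => P x y * log (T y / q y))]
  simp_rw [← sum_mul, hq]
  linarith

end

namespace Matrix

variable {𝕜 ι : Type*} [RCLike 𝕜] [Fintype ι] {A B : Matrix ι ι 𝕜}

open scoped MatrixOrder in
theorem PosSemidef.trace_mul_nonneg [DecidableEq ι] (hA : A.PosSemidef) (hB : B.PosSemidef) :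
    0 ≤ (A * B).trace := by
  obtain ⟨C, rfl⟩ := CStarAlgebra.nonneg_iff_eq_star_mul_self.mp hA.nonneg
  rw [star_eq_conjTranspose, mul_assoc, trace_mul_comm]
  exact (hB.mul_mul_conjTranspose_same C).trace_nonneg

theorem PosSemidef.eq_zero_of_re_trace_eq_zero (hA : A.PosSemidef) (h : RCLike.re A.trace = 0) :
    A = 0 :=
  hA.trace_eq_zero_iff.mp <| RCLike.ext (by simpa using h) (by
    simpa using (RCLike.nonneg_iff.mp hA.trace_nonneg).2)

theorem trace_vecMulVec_mul {R : Type*} [CommSemiring R] (a b : ι → R) (M : Matrix ι ι R) :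
    (vecMulVec a b * M).trace = b ⬝ᵥ M *ᵥ a := by
  rw [vecMulVec_mul, trace_vecMulVec, dotProduct_comm, dotProduct_mulVec]

end Matrix

theorem EuclideanSpace.trace_vecMulVec_self_star {ι : Type*} [Fintype ι]
    (ψ : EuclideanSpace ℂ ι) :
    (Matrix.vecMulVec (fun i => ψ i) (fun j => starRingEnd ℂ (ψ j))).trace =
      (‖ψ‖ ^ 2 : ℝ) := by
  rw [Matrix.trace_vecMulVec]
  exact_mod_cast inner_self_eq_norm_sq_to_K (𝕜 := ℂ) ψ

theorem IsPOVM.sum_re_trace {d m : ℕ} {π : Fin m → Matrix (Fin d) (Fin d) ℂ}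
    (hπ : IsPOVM π) :
    ∑ y, (π y).trace.re = d := by
  rw [← Complex.re_sum, ← trace_sum, hπ.2, trace_one, Fintype.card_fin, Complex.natCast_re]

theorem IsPOVM.sum_re_trace_mul {d m : ℕ} {π : Fin m → Matrix (Fin d) (Fin d) ℂ}
    (hπ : IsPOVM π) (A : Matrix (Fin d) (Fin d) ℂ) :
    ∑ y, (A * π y).trace.re = A.trace.re := by
  rw [← Complex.re_sum, ← trace_sum, ← mul_sum, hπ.2, mul_one]

theorem mutualInfo_le_log_sub_sum_etaFn {d n m : ℕ} {ρ : Fin n → Matrix (Fin d) (Fin d) ℂ}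
    {π : Fin m → Matrix (Fin d) (Fin d) ℂ} (hρ : IsEnsemble ρ) (hπ : IsPOVM π) :
    mutualInfo ρ π ≤ Real.log d - ∑ x, ∑ y, (ρ x).trace.re * (π y).trace.re *
      etaFn ((ρ x * π y).trace.re / ((ρ x).trace.re * (π y).trace.re)) := by
  rw [← hπ.sum_re_trace]
  refine sum_mul_log_div_marginal_le
    (fun x y => (Complex.nonneg_iff.mp ((hρ.1 x).trace_mul_nonneg (hπ.1 y))).1)
    (fun x => hπ.sum_re_trace_mul (ρ x)) ?_
    (fun y => (Complex.nonneg_iff.mp (hπ.1 y).trace_nonneg).1)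
    fun x y h => by simp [(hπ.1 y).eq_zero_of_re_trace_eq_zero h]
  rw [← Complex.re_sum, hρ.2, Complex.one_re]

theorem mutualInfo_pure_le_general
    {d m n : ℕ}
    (π : Fin m → Matrix (Fin d) (Fin d) ℂ) (hπ : IsPOVM π)
    (ψ : Fin n → EuclideanSpace ℂ (Fin d))
    (hnorm : ∑ x, ‖ψ x‖ ^ 2 = 1) :
    mutualInfo
        (fun x => Matrix.vecMulVec (fun i => ψ x i) (fun j => starRingEnd ℂ (ψ x j))) π
      ≤ Real.log d
        - ∑ x, ∑ y, ‖ψ x‖ ^ 2 * ((π y).trace).re *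
            etaFn ((dotProduct (fun i => starRingEnd ℂ (ψ x i))
                ((π y).mulVec fun i => ψ x i)).re
              / (‖ψ x‖ ^ 2 * ((π y).trace).re)) := by
  have hρ : IsEnsemble fun x =>
      Matrix.vecMulVec (fun i => ψ x i) (fun j => starRingEnd ℂ (ψ x j)) :=
    ⟨fun x => posSemidef_vecMulVec_self_star _, by
      simp_rw [EuclideanSpace.trace_vecMulVec_self_star]; exact_mod_cast hnorm⟩
  simpa only [trace_vecMulVec_mul, EuclideanSpace.trace_vecMulVec_self_star,
    Complex.ofReal_re] using mutualInfo_le_log_sub_sum_etaFn hρ hπ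

/-- for any POVM `π` with nonzero effects and any pure-state ensemble given
by nonzero vectors `ψ_x` with `∑_x ‖ψ_x‖² = 1`,
`I(ψ; π) ≤ ln d − ∑_{x,y} ‖ψ_x‖² (Tr π_y) η(⟨ψ_x|π_y|ψ_x⟩ / (‖ψ_x‖² Tr π_y))`. -/
theorem mutualInfo_pure_le
    {d m n : ℕ} (hd : 1 ≤ d)
    (π : Fin m → Matrix (Fin d) (Fin d) ℂ) (hπ : IsPOVM π) (hπ0 : ∀ y, π y ≠ 0)
    (ψ : Fin n → EuclideanSpace ℂ (Fin d)) (hψ0 : ∀ x, ψ x ≠ 0)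
    (hnorm : ∑ x, ‖ψ x‖ ^ 2 = 1) :
    mutualInfo
        (fun x => Matrix.vecMulVec (fun i => ψ x i) (fun j => starRingEnd ℂ (ψ x j))) π
      ≤ Real.log d
        - ∑ x, ∑ y, ‖ψ x‖ ^ 2 * ((π y).trace).re *
            etaFn ((dotProduct (fun i => starRingEnd ℂ (ψ x i))
                ((π y).mulVec fun i => ψ x i)).re
              / (‖ψ x‖ ^ 2 * ((π y).trace).re)) :=
  mutualInfo_pure_le_general π hπ ψ hnorm
end
end

section
/- The informational power of the 2-dimensional tetrahedral (SIC) POVM (π_y)_{y=1}^4 equals ln(4/3): the supremum over all ensembles (ρ_x) of the mutual information I(ρ; π) equals ln(4/3), and it is attained by the anti-tetrahedral ensemble ρ_x = (1/8)(I − s_x·σ), x = 1,…,4, which satisfies ρ_x π_x = 0 for every x. -/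
open MeasureTheory Matrix Finset Filter
open scoped ComplexOrder

noncomputable section

/-- The Pauli matrices. -/
def pauliX : Matrix (Fin 2) (Fin 2) ℂ := !![0, 1; 1, 0]
def pauliY : Matrix (Fin 2) (Fin 2) ℂ := !![0, -Complex.I; Complex.I, 0]
def pauliZ : Matrix (Fin 2) (Fin 2) ℂ := !![1, 0; 0, -1]

/-- `s·σ = s₁σ₁ + s₂σ₂ + s₃σ₃` for `s ∈ ℝ³`. -/
def dotPauli (s : Fin 3 → ℝ) : Matrix (Fin 2) (Fin 2) ℂ :=
  (s 0 : ℂ) • pauliX + (s 1 : ℂ) • pauliY + (s 2 : ℂ) • pauliZ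
/-- Bloch vectors of the tetrahedral (SIC) POVM. -/
def tetraVec : Fin 4 → Fin 3 → ℝ := fun y i =>
  (![![1, 1, 1], ![1, -1, -1], ![-1, 1, -1], ![-1, -1, 1]] : Fin 4 → Fin 3 → ℝ) y i
    / Real.sqrt 3

/-- The 2-dimensional tetrahedral (SIC) POVM `π_y = (1/4)(I + s_y·σ)`. -/
def tetraPOVM : Fin 4 → Matrix (Fin 2) (Fin 2) ℂ :=
  fun y => (1 / 4 : ℂ) • (1 + dotPauli (tetraVec y))
/-- The anti-tetrahedral ensemble `ρ_x = (1/8)(I − s_x·σ)`. -/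
def antiTetra : Fin 4 → Matrix (Fin 2) (Fin 2) ℂ :=
  fun x => (1 / 8 : ℂ) • (1 - dotPauli (tetraVec x))

/-!
Write `P x y = tr (ρ x * π y)`, with row sums `p x = tr (ρ x)` and column sums `q y`. The mutual
information splits as `∑ₓ ∑ᵧ P log (P / p x) + H(q)`, and the entropy `H(q)` of the outcome
distribution is at most `log 4`. For the first term, the tetrahedron is a tight frame (`∑ᵧ (s_y ⬝ r)² = 4/3 |r|²`), so a
state with trace `t` and Bloch vector `r`, `|r| ≤ t`, has `∑ᵧ tr (ρ π_y)² = t²/4 + |r|²/12 ≤ t²/3`;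
together with `log u ≤ u - 1` this bounds each row by `p x * log (1/3)`. Hence the mutual
information is at most `log (4/3)`, and the anti-tetrahedral ensemble, whose joint distribution is
uniform on the twelve off-diagonal pairs, attains it.
-/

-- Schur product theorem: `tr (A * B)` is the sum of all entries of `A ⊙ Bᵀ`.
lemma Matrix.PosSemidef.trace_mul_nonneg_s15 {n 𝕜 : Type*} [Fintype n] [RCLike 𝕜]
    {A B : Matrix n n 𝕜} (hA : A.PosSemidef) (hB : B.PosSemidef) : 0 ≤ (A * B).trace := by
  have h := (hA.hadamard hB.transpose).dotProduct_mulVec_nonneg (fun _ => 1)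
  convert h using 1
  simp [trace, mul_apply, dotProduct, mulVec]

section ClassicalInformation

open Real

variable {ι κ : Type*} [Fintype ι] [Fintype κ]

def classicalMutualInfo (P : ι → κ → ℝ) : ℝ :=
  ∑ x, ∑ y, P x y * log (P x y / ((∑ y', P x y') * ∑ x', P x' y))

lemma sum_mul_log_div_sum_le_of_sum_sq_le {P : κ → ℝ} (hP : ∀ y, 0 ≤ P y) {c : ℝ} (hc : 0 < c)
    (h : ∑ y, P y ^ 2 ≤ c * (∑ y, P y) ^ 2) :
    ∑ y, P y * log (P y / ∑ y', P y') ≤ (∑ y, P y) * log c := by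
  set p := ∑ y, P y
  rcases (sum_nonneg fun y _ => hP y : 0 ≤ p).eq_or_lt with hp | hp
  · have hP0 : ∀ y, P y = 0 := fun y =>
      (sum_eq_zero_iff_of_nonneg fun y _ => hP y).mp hp.symm y (mem_univ y)
    simp [p, hP0]
  have hpt : ∀ y, P y * log (P y / p) ≤ P y * log c + (P y ^ 2 / (c * p) - P y) := by
    intro y
    rcases (hP y).eq_or_lt with h0 | hpos
    · simp [← h0]
    have hlog : log (P y / p) = log c + log (P y / (c * p)) := by
      rw [← log_mul hc.ne' (by positivity)]
      congr 1
      field_simp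
    have := mul_le_mul_of_nonneg_left (log_le_sub_one_of_pos (x := P y / (c * p)) (by positivity))
      (hP y)
    have hsq : P y * (P y / (c * p) - 1) = P y ^ 2 / (c * p) - P y := by ring
    rw [hlog, mul_add]
    linarith
  calc ∑ y, P y * log (P y / p)
      ≤ ∑ y, (P y * log c + (P y ^ 2 / (c * p) - P y)) := sum_le_sum fun y _ => hpt y
    _ = p * log c + ((∑ y, P y ^ 2) / (c * p) - p) := by
      rw [sum_add_distrib, sum_sub_distrib, ← sum_mul, ← sum_div]
    _ ≤ p * log c + (c * p ^ 2 / (c * p) - p) := by gcongr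
    _ = p * log c := by field_simp; ring

lemma neg_sum_mul_log_le_log_card {q : κ → ℝ} (hq : ∀ y, 0 ≤ q y) (hq1 : ∑ y, q y = 1) :
    -∑ y, q y * log (q y) ≤ log (Fintype.card κ) := by
  set m : ℝ := (Fintype.card κ : ℝ)
  have hm : 0 < m := by
    have : Nonempty κ := by
      by_contra h
      simp [not_nonempty_iff.mp h] at hq1
    exact Nat.cast_pos.mpr Fintype.card_pos
  have hpt : ∀ y, m * q y - 1 ≤ m * (q y * log m + q y * log (q y)) := by
    intro y
    rcases (hq y).eq_or_lt with h0 | hpos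
    · simp [← h0]
    have := self_sub_one_le_mul_log (x := m * q y) (by positivity)
    rw [log_mul hm.ne' hpos.ne'] at this
    linarith
  have := sum_le_sum fun y (_ : y ∈ univ) => hpt y
  rw [sum_sub_distrib, ← mul_sum, hq1, ← mul_sum, sum_add_distrib, ← sum_mul, hq1] at this
  simp only [sum_const, card_univ, nsmul_eq_mul, mul_one] at this
  nlinarith

theorem classicalMutualInfo_le_log_of_sum_sq_le {P : ι → κ → ℝ} (hP : ∀ x y, 0 ≤ P x y)
    (hP1 : ∑ x, ∑ y, P x y = 1) {c : ℝ} (hc : 0 < c)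
    (hrow : ∀ x, ∑ y, P x y ^ 2 ≤ c * (∑ y, P x y) ^ 2) :
    classicalMutualInfo P ≤ log (c * Fintype.card κ) := by
  set p : ι → ℝ := fun x => ∑ y, P x y
  set q : κ → ℝ := fun y => ∑ x, P x y
  have hq1 : ∑ y, q y = 1 := by rw [sum_comm]; exact hP1
  have hpt : ∀ x y, P x y * log (P x y / (p x * q y))
      = P x y * log (P x y / p x) - P x y * log (q y) := by
    intro x y
    rcases (hP x y).eq_or_lt with h0 | hpos
    · simp [← h0]
    have hpx : 0 < p x := hpos.trans_le (single_le_sum (fun y _ => hP x y) (mem_univ y))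
    have hqy : 0 < q y := hpos.trans_le (single_le_sum (fun x _ => hP x y) (mem_univ x))
    rw [← div_div, log_div (by positivity) hqy.ne', mul_sub]
  have hsplit : classicalMutualInfo P
      = ∑ x, ∑ y, P x y * log (P x y / p x) - ∑ y, q y * log (q y) := by
    show ∑ x, ∑ y, P x y * log (P x y / (p x * q y)) = _
    simp only [hpt, sum_sub_distrib]
    rw [sum_comm (f := fun x y => P x y * log (q y))]
    simp only [← sum_mul]
    rfl
  have hrows : ∑ x, ∑ y, P x y * log (P x y / p x) ≤ log c := by
    calc ∑ x, ∑ y, P x y * log (P x y / p x) ≤ ∑ x, p x * log c :=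
          sum_le_sum fun x _ => sum_mul_log_div_sum_le_of_sum_sq_le (hP x) hc (hrow x)
      _ = log c := by rw [← sum_mul, hP1, one_mul]
  have hcols := neg_sum_mul_log_le_log_card (fun y => sum_nonneg fun x _ => hP x y) hq1
  have hcard : (Fintype.card κ : ℝ) ≠ 0 := by
    intro h
    simp [q, Fintype.card_eq_zero_iff.mp (by exact_mod_cast h)] at hq1
  rw [hsplit, log_mul hc.ne' hcard]
  linarith

end ClassicalInformation

section POVM

variable {d m : ℕ} {π : Fin m → Matrix (Fin d) (Fin d) ℂ}

lemma sum_re_trace_mul_of_sum_eq_one (hπ : ∑ y, π y = 1) (ρ : Matrix (Fin d) (Fin d) ℂ) :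
    ∑ y, (ρ * π y).trace.re = ρ.trace.re := by
  rw [← Complex.re_sum, ← trace_sum, ← mul_sum, hπ, mul_one]

lemma mutualInfo_eq_classicalMutualInfo (hπ : ∑ y, π y = 1) {n : ℕ}
    (ρ : Fin n → Matrix (Fin d) (Fin d) ℂ) :
    mutualInfo ρ π = classicalMutualInfo fun x y => (ρ x * π y).trace.re := by
  simp only [mutualInfo, classicalMutualInfo, sum_re_trace_mul_of_sum_eq_one hπ]

theorem mutualInfo_le_log_of_sum_sq_le (hπ : IsPOVM π) {c : ℝ} (hc : 0 < c)
    (hπc : ∀ ρ : Matrix (Fin d) (Fin d) ℂ, ρ.PosSemidef →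
      ∑ y, (ρ * π y).trace.re ^ 2 ≤ c * ρ.trace.re ^ 2)
    {n : ℕ} {ρ : Fin n → Matrix (Fin d) (Fin d) ℂ} (hρ : IsEnsemble ρ) :
    mutualInfo ρ π ≤ Real.log (c * m) := by
  have hrow := sum_re_trace_mul_of_sum_eq_one hπ.2
  have hP : ∀ x y, 0 ≤ (ρ x * π y).trace.re := fun x y =>
    (Complex.nonneg_iff.mp ((hρ.1 x).trace_mul_nonneg_s15 (hπ.1 y))).1
  have hP1 : ∑ x, ∑ y, (ρ x * π y).trace.re = 1 := by
    simp only [hrow, ← Complex.re_sum, hρ.2, Complex.one_re]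
  rw [mutualInfo_eq_classicalMutualInfo hπ.2]
  simpa using classicalMutualInfo_le_log_of_sum_sq_le hP hP1 hc fun x => by
    simpa only [hrow] using hπc _ (hρ.1 x)

lemma infoPower_eq_of_forall_le {w : ℝ}
    (hle : ∀ (n : ℕ) (ρ : Fin n → Matrix (Fin d) (Fin d) ℂ), IsEnsemble ρ → mutualInfo ρ π ≤ w)
    {n : ℕ} {ρ : Fin n → Matrix (Fin d) (Fin d) ℂ} (hρ : IsEnsemble ρ) (hw : mutualInfo ρ π = w) :
    infoPower π = w :=
  IsGreatest.csSup_eq ⟨⟨n, ρ, hρ, hw.symm⟩, by rintro _ ⟨n, ρ, hρ, rfl⟩; exact hle n ρ hρ⟩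

end POVM

lemma dotPauli_add (s t : Fin 3 → ℝ) : dotPauli (s + t) = dotPauli s + dotPauli t := by
  simp only [dotPauli, Pi.add_apply, Complex.ofReal_add, add_smul]
  abel

lemma dotPauli_neg (s : Fin 3 → ℝ) : dotPauli (-s) = -dotPauli s := by
  simp only [dotPauli, Pi.neg_apply, Complex.ofReal_neg, neg_smul]
  abel

lemma dotPauli_zero : dotPauli 0 = 0 := by simp [dotPauli]

lemma dotPauli_sum {ι : Type*} (s : Finset ι) (f : ι → Fin 3 → ℝ) :
    ∑ i ∈ s, dotPauli (f i) = dotPauli (∑ i ∈ s, f i) :=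
  (map_sum (AddMonoidHom.mk' dotPauli dotPauli_add) f s).symm

lemma dotPauli_isHermitian (s : Fin 3 → ℝ) : (dotPauli s).IsHermitian := by
  ext i j
  fin_cases i <;> fin_cases j <;> simp [dotPauli, pauliX, pauliY, pauliZ]

lemma trace_dotPauli (s : Fin 3 → ℝ) : (dotPauli s).trace = 0 := by
  simp [dotPauli, pauliX, pauliY, pauliZ, Matrix.trace_fin_two]

lemma dotPauli_mul_dotPauli (s t : Fin 3 → ℝ) :
    dotPauli s * dotPauli t
      = ((s ⬝ᵥ t : ℝ) : ℂ) • 1 + Complex.I • dotPauli (s ⨯₃ t) := by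
  ext i j
  fin_cases i <;> fin_cases j <;>
    simp [dotPauli, pauliX, pauliY, pauliZ, cross_apply, dotProduct, Fin.sum_univ_three,
      Matrix.mul_apply, Fin.sum_univ_two] <;> ring_nf <;> simp [Complex.I_sq] <;> ring

lemma dotPauli_mul_self (s : Fin 3 → ℝ) :
    dotPauli s * dotPauli s = ((s ⬝ᵥ s : ℝ) : ℂ) • 1 := by
  rw [dotPauli_mul_dotPauli, cross_self, dotPauli_zero, smul_zero, add_zero]

lemma trace_dotPauli_mul_dotPauli (s t : Fin 3 → ℝ) :
    (dotPauli s * dotPauli t).trace = 2 * (s ⬝ᵥ t : ℝ) := by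
  rw [dotPauli_mul_dotPauli, trace_add, trace_smul, trace_smul, trace_dotPauli, trace_one]
  simp [mul_comm]

lemma posSemidef_one_add_dotPauli {s : Fin 3 → ℝ} (hs : s ⬝ᵥ s = 1) :
    (1 + dotPauli s).PosSemidef := by
  have hsq : (1 + dotPauli s)ᴴ * (1 + dotPauli s) = (2 : ℝ) • (1 + dotPauli s) := by
    rw [conjTranspose_add, conjTranspose_one, (dotPauli_isHermitian s).eq, add_mul, mul_add,
      mul_add, dotPauli_mul_self, hs]
    simp only [one_mul, mul_one, Complex.ofReal_one, one_smul]
    module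
  have := (posSemidef_conjTranspose_mul_self (1 + dotPauli s)).smul (a := (1 / 2 : ℝ)) (by norm_num)
  rwa [hsq, smul_smul, show (1 / 2 : ℝ) * 2 = 1 by norm_num, one_smul] at this

/-- For Hermitian `ρ`, `ρ = (tr ρ • 1 + dotPauli (blochVec ρ)) / 2`; the formula is chosen so that
`re_trace_mul_dotPauli` holds for every `ρ`. -/
def blochVec (ρ : Matrix (Fin 2) (Fin 2) ℂ) : Fin 3 → ℝ :=
  ![(ρ 0 1).re + (ρ 1 0).re, (ρ 1 0).im - (ρ 0 1).im, (ρ 0 0).re - (ρ 1 1).re]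

lemma re_trace_mul_dotPauli (ρ : Matrix (Fin 2) (Fin 2) ℂ) (s : Fin 3 → ℝ) :
    (ρ * dotPauli s).trace.re = s ⬝ᵥ blochVec ρ := by
  simp [dotPauli, pauliX, pauliY, pauliZ, blochVec, Matrix.trace_fin_two, Matrix.mul_apply,
    Fin.sum_univ_two, dotProduct, Fin.sum_univ_three]
  ring

lemma blochVec_dotProduct_self_le {ρ : Matrix (Fin 2) (Fin 2) ℂ} (hρ : ρ.PosSemidef) :
    blochVec ρ ⬝ᵥ blochVec ρ ≤ ρ.trace.re ^ 2 := by
  have ha := (Complex.nonneg_iff.mp (hρ.diag_nonneg (i := 0))).2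
  have hb := (Complex.nonneg_iff.mp (hρ.diag_nonneg (i := 1))).2
  have hdet := (Complex.nonneg_iff.mp hρ.det_nonneg).1
  have hc : ρ 1 0 = star (ρ 0 1) := (hρ.isHermitian.apply 1 0).symm
  simp only [det_fin_two, trace_fin_two, hc, RCLike.star_def, Complex.sub_re, Complex.add_re,
    Complex.mul_re, Complex.conj_re, Complex.conj_im, ← ha, ← hb, blochVec, dotProduct,
    Fin.sum_univ_three, cons_val_zero, cons_val_one, Matrix.cons_val] at hdet ⊢
  nlinarith [hdet]

lemma tetraVec_dotProduct (x y : Fin 4) :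
    tetraVec x ⬝ᵥ tetraVec y = if x = y then 1 else -1 / 3 := by
  have h3 : Real.sqrt 3 ^ 2 = 3 := Real.sq_sqrt (by norm_num)
  fin_cases x <;> fin_cases y <;>
    simp [tetraVec, dotProduct, Fin.sum_univ_three, div_mul_div_comm, ← sq, div_pow, h3] <;>
    norm_num

lemma sum_tetraVec : ∑ y, tetraVec y = 0 := by
  ext i
  fin_cases i <;> simp [tetraVec, Fin.sum_univ_four] <;> ring

lemma sum_tetraVec_dotProduct_sq (r : Fin 3 → ℝ) :
    ∑ y, (tetraVec y ⬝ᵥ r) ^ 2 = 4 / 3 * (r ⬝ᵥ r) := by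
  have h3 : Real.sqrt 3 ^ 2 = 3 := Real.sq_sqrt (by norm_num)
  simp only [tetraVec, dotProduct, Fin.sum_univ_four, Fin.sum_univ_three, cons_val', cons_val_zero,
    cons_val_fin_one, cons_val_one, Matrix.cons_val]
  field_simp
  rw [h3]
  ring

lemma tetraVec_dotProduct_self (y : Fin 4) : tetraVec y ⬝ᵥ tetraVec y = 1 := by
  simp [tetraVec_dotProduct]

lemma isPOVM_tetraPOVM : IsPOVM tetraPOVM := by
  refine ⟨fun y => (posSemidef_one_add_dotPauli (tetraVec_dotProduct_self y)).smul
    (by norm_num [Complex.nonneg_iff]), ?_⟩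
  simp only [tetraPOVM, ← smul_sum, sum_add_distrib, dotPauli_sum, sum_tetraVec,
    dotPauli_zero, add_zero, sum_const, card_univ, Fintype.card_fin]
  rw [← Nat.cast_smul_eq_nsmul ℂ, smul_smul]
  norm_num

lemma re_trace_mul_tetraPOVM (ρ : Matrix (Fin 2) (Fin 2) ℂ) (y : Fin 4) :
    (ρ * tetraPOVM y).trace.re = (ρ.trace.re + tetraVec y ⬝ᵥ blochVec ρ) / 4 := by
  rw [tetraPOVM, Matrix.mul_smul, trace_smul, mul_add, mul_one, trace_add, smul_eq_mul,
    Complex.mul_re, Complex.add_re, re_trace_mul_dotPauli]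
  norm_num
  ring

lemma sum_sq_re_trace_mul_tetraPOVM_le {ρ : Matrix (Fin 2) (Fin 2) ℂ} (hρ : ρ.PosSemidef) :
    ∑ y, (ρ * tetraPOVM y).trace.re ^ 2 ≤ 1 / 3 * ρ.trace.re ^ 2 := by
  set t := ρ.trace.re
  set r := blochVec ρ
  have hlin : ∑ y, tetraVec y ⬝ᵥ r = 0 := by rw [← sum_dotProduct, sum_tetraVec, zero_dotProduct]
  have hexp : ∑ y, (ρ * tetraPOVM y).trace.re ^ 2
      = (4 * t ^ 2 + 2 * t * ∑ y, tetraVec y ⬝ᵥ r + ∑ y, (tetraVec y ⬝ᵥ r) ^ 2) / 16 := by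
    simp only [re_trace_mul_tetraPOVM, Fin.sum_univ_four]
    ring
  rw [hexp, hlin, sum_tetraVec_dotProduct_sq]
  nlinarith [blochVec_dotProduct_self_le hρ]

lemma trace_antiTetra_mul_tetraPOVM (x y : Fin 4) :
    (antiTetra x * tetraPOVM y).trace = if x = y then 0 else 1 / 12 := by
  have hprod : (1 - dotPauli (tetraVec x)) * (1 + dotPauli (tetraVec y))
      = 1 + dotPauli (tetraVec y) - dotPauli (tetraVec x)
        - dotPauli (tetraVec x) * dotPauli (tetraVec y) := by noncomm_ring
  rw [antiTetra, tetraPOVM, smul_mul_smul_comm, trace_smul, hprod, trace_sub, trace_sub,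
    trace_add, trace_dotPauli, trace_dotPauli, trace_dotPauli_mul_dotPauli,
    trace_one, tetraVec_dotProduct]
  split_ifs <;> norm_num

lemma antiTetra_mul_tetraPOVM_self (x : Fin 4) : antiTetra x * tetraPOVM x = 0 := by
  have hprod : (1 - dotPauli (tetraVec x)) * (1 + dotPauli (tetraVec x))
      = 1 - dotPauli (tetraVec x) * dotPauli (tetraVec x) := by noncomm_ring
  rw [antiTetra, tetraPOVM, smul_mul_smul_comm, hprod, dotPauli_mul_self,
    tetraVec_dotProduct_self]
  simp

lemma trace_antiTetra (x : Fin 4) : (antiTetra x).trace = 1 / 4 := by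
  rw [antiTetra, trace_smul, trace_sub, trace_dotPauli, trace_one]
  norm_num

lemma isEnsemble_antiTetra : IsEnsemble antiTetra := by
  refine ⟨fun x => ?_, ?_⟩
  · rw [antiTetra, sub_eq_add_neg, ← dotPauli_neg]
    exact (posSemidef_one_add_dotPauli (by simp [tetraVec_dotProduct_self])).smul
      (by norm_num [Complex.nonneg_iff])
  · simp only [trace_antiTetra, Fin.sum_univ_four]
    norm_num

lemma mutualInfo_antiTetra_tetraPOVM : mutualInfo antiTetra tetraPOVM = Real.log (4 / 3) := by
  simp [mutualInfo, trace_antiTetra_mul_tetraPOVM, trace_antiTetra, Fin.sum_univ_four]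
  norm_num
  ring

/-- the informational power of the tetrahedral (SIC) POVM equals
`ln(4/3)`, attained by the anti-tetrahedral ensemble, which satisfies `ρ_x π_x = 0`. -/
theorem tetra_infoPower :
    infoPower tetraPOVM = Real.log (4 / 3)
    ∧ IsEnsemble antiTetra
    ∧ mutualInfo antiTetra tetraPOVM = Real.log (4 / 3)
    ∧ ∀ x, antiTetra x * tetraPOVM x = 0 := by
  have hbound : ∀ (n : ℕ) (ρ : Fin n → Matrix (Fin 2) (Fin 2) ℂ), IsEnsemble ρ →
      mutualInfo ρ tetraPOVM ≤ Real.log (4 / 3) := fun n ρ hρ => by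
    convert mutualInfo_le_log_of_sum_sq_le isPOVM_tetraPOVM (by norm_num : (0 : ℝ) < 1 / 3)
      (fun _ => sum_sq_re_trace_mul_tetraPOVM_le) hρ using 2
    norm_num
  exact ⟨infoPower_eq_of_forall_le hbound isEnsemble_antiTetra mutualInfo_antiTetra_tetraPOVM,
    isEnsemble_antiTetra, mutualInfo_antiTetra_tetraPOVM, antiTetra_mul_tetraPOVM_self⟩
end
end
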